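/- arXiv:1010.4989 — 2 statements merged into one kernel-verified Lean document; each statement's English description precedes it below -/
import Mathlib

section
/- For every Δ > 0 there exists a function g : ℝ → ℝ that is twice continuously differentiable on [y₀ − Δ, ∞), satisfies g(y₀ − Δ) = C̄, g'(y₀ − Δ) = 0, g''(y) = h(y, g'(y)) for all y ≥ y₀ − Δ, and g'(y) ∈ [−M', M'] for all y ≥ y₀ − Δ. In particular, the solution of this initial value problem does not explode in finite time. -/
open Real Set

/-- The right-hand side of the ODE g''(y) = h(y, g'(y)). -/
noncomputable def h (μ σ δ y z : ℝ) : ℝ :=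
  (-(2*μ)/σ^2 + 2/(1 + exp (-y)))
  + ((4*μ)/σ^2 - 2/(1 + exp (-y)) - 1 - (2*δ/σ^2)*(1 + exp y)) * z
  + (-(2*μ)/σ^2 + 1 + (4*δ/σ^2)*(1 + exp y)) * z^2
  - (2*δ/σ^2)*(1 + exp y) * z^3

/-- The constant M' from the proof of Proposition p:FBVP. -/
noncomputable def M' (μ σ δ : ℝ) : ℝ :=
  max ((4*(μ + σ^2)/δ) ^ ((1:ℝ)/3))
    (max (Real.sqrt (8*μ/δ)) (8 + (4*μ + 2*σ^2)/δ))

/-- The zero of the constant coefficient of the ODE. -/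
noncomputable def y0 (μ σ : ℝ) : ℝ := -Real.log (σ^2/μ - 1)

/-!
The slope `z = g'` solves the first-order equation `z' = h(y, z)`. Because `h` is cubic in `z`
with negative leading coefficient, `h(y, K) < 0 < h(y, -K)` for every `y` when `K = M'`, so
forward in time a solution cannot leave `[-K, K]`. Clamping the second argument of `h` to
`[-K, K]` gives a field that is bounded and uniformly Lipschitz on bounded time intervals; it
therefore has a global solution (Picard–Lindelöf on `[t₀ - n, t₀ + n]`, glued by uniqueness).
By the barrier the clamp is never active from `y₀ - Δ` on, and `g` is `Cbar` plus the primitive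
of that solution.
-/

open Function NNReal

section GlobalSolution

variable {E : Type*} [NormedAddCommGroup E] [NormedSpace ℝ E] {v : ℝ → E → E}

theorem exists_forall_mem_Icc_hasDerivWithinAt_of_lipschitzWith [CompleteSpace E] {a b : ℝ}
    (t₀ : Icc a b) (x₀ : E) {K : ℝ≥0} {C : ℝ} (hlip : ∀ t ∈ Icc a b, LipschitzWith K (v t))
    (hcont : ∀ x, ContinuousOn (v · x) (Icc a b))
    (hbdd : ∀ t ∈ Icc a b, ∀ x, ‖v t x‖ ≤ C) :
    ∃ z : ℝ → E, z t₀ = x₀ ∧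
      ∀ t ∈ Icc a b, HasDerivWithinAt z (v t (z t)) (Icc a b) t := by
  refine IsPicardLindelof.exists_eq_forall_mem_Icc_hasDerivWithinAt₀
    (a := C.toNNReal * (b - a).toNNReal) (L := C.toNNReal) (K := K)
    ⟨fun t ht => (hlip t ht).lipschitzOnWith, fun x _ => hcont x,
      fun t ht x _ => (hbdd t ht x).trans (le_coe_toNNReal C), ?_⟩
  have hmax : max (b - t₀) (t₀ - a) ≤ (b - a).toNNReal :=
    (max_le (by linarith [t₀.2.1]) (by linarith [t₀.2.2])).trans (le_coe_toNNReal _)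
  simpa using mul_le_mul_of_nonneg_left hmax C.toNNReal.2

theorem exists_forall_hasDerivAt_of_lipschitzWith [CompleteSpace E]
    (hcont : ∀ x, Continuous (v · x))
    (hlip : ∀ a b, ∃ K, ∀ t ∈ Icc a b, LipschitzWith K (v t))
    (hbdd : ∀ a b, ∃ C, ∀ t ∈ Icc a b, ∀ x, ‖v t x‖ ≤ C) (t₀ : ℝ) (x₀ : E) :
    ∃ z : ℝ → E, z t₀ = x₀ ∧ ∀ t, HasDerivAt z (v t (z t)) t := by
  have hloc (n : ℕ) : ∃ z : ℝ → E, z t₀ = x₀ ∧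
      ∀ t ∈ Ioo (t₀ - (n + 1)) (t₀ + (n + 1)), HasDerivAt z (v t (z t)) t := by
    obtain ⟨K, hK⟩ := hlip (t₀ - (n + 1)) (t₀ + (n + 1))
    obtain ⟨C, hC⟩ := hbdd (t₀ - (n + 1)) (t₀ + (n + 1))
    obtain ⟨z, hz₀, hz⟩ := exists_forall_mem_Icc_hasDerivWithinAt_of_lipschitzWith
      ⟨t₀, by constructor <;> linarith⟩ x₀ hK (fun x => (hcont x).continuousOn) hC
    exact ⟨z, hz₀, fun t ht =>
      (hz t (Ioo_subset_Icc_self ht)).hasDerivAt (Icc_mem_nhds ht.1 ht.2)⟩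
  choose z hz₀ hz using hloc
  have huniq {m n : ℕ} (hmn : m ≤ n) :
      EqOn (z m) (z n) (Ioo (t₀ - (m + 1)) (t₀ + (m + 1))) := by
    obtain ⟨K, hK⟩ := hlip (t₀ - (n + 1)) (t₀ + (n + 1))
    have hmn' : (m : ℝ) ≤ n := by exact_mod_cast hmn
    have hsub : Ioo (t₀ - (m + 1)) (t₀ + (m + 1)) ⊆ Ioo (t₀ - (n + 1)) (t₀ + (n + 1)) :=
      Ioo_subset_Ioo (by linarith) (by linarith)
    exact ODE_solution_unique_of_mem_Ioo (s := fun _ => univ)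
      (fun t ht => (hK t (Ioo_subset_Icc_self (hsub ht))).lipschitzOnWith)
      ⟨by linarith, by linarith⟩ (fun t ht => ⟨hz m t ht, trivial⟩)
      (fun t ht => ⟨hz n t (hsub ht), trivial⟩) ((hz₀ m).trans (hz₀ n).symm)
  set N : ℝ → ℕ := fun t => ⌈|t - t₀|⌉₊
  have hZ (n : ℕ) : EqOn (fun t => z (N t) t) (z n) (Ioo (t₀ - n) (t₀ + n)) := by
    intro t ht
    have hNn : N t ≤ n :=
      Nat.ceil_le.mpr (abs_sub_lt_iff.mpr ⟨by linarith [ht.2], by linarith [ht.1]⟩).le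
    obtain ⟨h₁, h₂⟩ :=
      abs_sub_lt_iff.mp ((Nat.le_ceil |t - t₀|).trans_lt (lt_add_one (N t : ℝ)))
    exact huniq hNn ⟨by linarith, by linarith⟩
  refine ⟨fun t => z (N t) t, by simp [N, hz₀], fun t => ?_⟩
  set n := N t + 1
  have ht : t ∈ Ioo (t₀ - n) (t₀ + n) := by
    obtain ⟨h₁, h₂⟩ :=
      abs_sub_lt_iff.mp ((Nat.le_ceil |t - t₀|).trans_lt (lt_add_one (N t : ℝ)))
    constructor <;> push_cast [n] <;> linarith
  rw [hZ n ht]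
  exact (hz n t ⟨by linarith [ht.1], by linarith [ht.2]⟩).congr_of_eventuallyEq
    (Filter.eventuallyEq_of_mem (Ioo_mem_nhds ht.1 ht.2) (hZ n))

theorem contDiff_one_of_forall_hasDerivAt {z : ℝ → E}
    (hv : Continuous (uncurry v)) (hz : ∀ t, HasDerivAt z (v t (z t)) t) : ContDiff ℝ 1 z := by
  refine contDiff_one_iff_deriv.mpr ⟨fun t => (hz t).differentiableAt, ?_⟩
  rw [funext fun t => (hz t).deriv]
  exact hv.comp (continuous_id.prodMk (continuous_iff_continuousAt.mpr fun t =>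
    (hz t).continuousAt))

end GlobalSolution

lemma mem_Icc_of_forall_hasDerivAt {f : ℝ → ℝ → ℝ} {z : ℝ → ℝ} {a K : ℝ}
    (hz : ∀ t, HasDerivAt z (f t (z t)) t) (ha : z a ∈ Icc (-K) K)
    (hup : ∀ t, f t K < 0) (hlow : ∀ t, 0 < f t (-K)) {t : ℝ} (ht : a ≤ t) :
    z t ∈ Icc (-K) K := by
  have hzc : ContinuousOn z (Icc a t) := fun s _ => (hz s).continuousAt.continuousWithinAt
  have hle := image_le_of_deriv_right_lt_deriv_boundary hzc
    (fun s _ => (hz s).hasDerivWithinAt) ha.2 (fun _ => hasDerivAt_const _ K)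
    (fun s _ hs => hs ▸ hup s)
  have hge := image_le_of_deriv_right_lt_deriv_boundary hzc.neg
    (fun s _ => (hz s).neg.hasDerivWithinAt) (neg_le.mp ha.1) (fun _ => hasDerivAt_const _ K)
    (fun s _ hs => by
      rw [Pi.neg_apply, neg_eq_iff_eq_neg] at hs
      simpa [hs] using hlow s)
  exact ⟨neg_le.mp (hge ⟨ht, le_rfl⟩), hle ⟨ht, le_rfl⟩⟩

lemma exists_contDiff_two_deriv_eq {z : ℝ → ℝ} (hz : ContDiff ℝ 1 z) (a C : ℝ) :
    ∃ g : ℝ → ℝ, ContDiff ℝ 2 g ∧ g a = C ∧ deriv g = z := by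
  have hg (y : ℝ) : HasDerivAt (fun y => C + ∫ u in a..y, z u) (z y) y :=
    (hz.continuous.integral_hasStrictDerivAt a y).hasDerivAt.const_add C
  have hderiv : deriv (fun y => C + ∫ u in a..y, z u) = z := funext fun y => (hg y).deriv
  refine ⟨fun y => C + ∫ u in a..y, z u, ?_, by simp, hderiv⟩
  rw [show (2 : WithTop ℕ∞) = 1 + 1 from rfl, contDiff_succ_iff_deriv, hderiv]
  exact ⟨fun y => (hg y).differentiableAt, by simp, hz⟩

lemma max_min_mem_Icc {α : Type*} [LinearOrder α] {a b : α} (hab : a ≤ b) (x : α) :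
    max a (min b x) ∈ Icc a b :=
  (projIcc a b hab x).2

section Truncation

variable (μ σ δ : ℝ)

lemma contDiff_h : ContDiff ℝ 1 (fun p : ℝ × ℝ => h μ σ δ p.1 p.2) := by
  unfold h
  fun_prop (disch := intro; positivity)

noncomputable def hTrunc (K t x : ℝ) : ℝ := h μ σ δ t (max (-K) (min K x))

variable {μ σ δ} {K : ℝ}

lemma hTrunc_of_mem {t x : ℝ} (hx : x ∈ Icc (-K) K) :
    hTrunc μ σ δ K t x = h μ σ δ t x := by
  rw [hTrunc, min_eq_right hx.2, max_eq_right hx.1]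

lemma continuous_hTrunc : Continuous (uncurry (hTrunc μ σ δ K)) :=
  (contDiff_h μ σ δ).continuous.comp (f := fun p : ℝ × ℝ => (p.1, max (-K) (min K p.2)))
    (by fun_prop)

lemma exists_lipschitzWith_hTrunc (hK : 0 ≤ K) (a b : ℝ) :
    ∃ L, ∀ t ∈ Icc a b, LipschitzWith L (hTrunc μ σ δ K t) := by
  obtain ⟨L, hL⟩ := (contDiff_h μ σ δ).locallyLipschitz.locallyLipschitzOn
    |>.exists_lipschitzOnWith_of_compact (isCompact_Icc.prod (isCompact_Icc (a := -K) (b := K)))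
  have hclamp : LipschitzWith 1 fun x : ℝ => max (-K) (min K x) :=
    (LipschitzWith.id.const_min K).const_max (-K)
  refine ⟨L, fun t ht => LipschitzWith.of_dist_le_mul fun x y => ?_⟩
  calc dist (hTrunc μ σ δ K t x) (hTrunc μ σ δ K t y)
      ≤ L * dist (t, max (-K) (min K x)) (t, max (-K) (min K y)) :=
        hL.dist_le_mul (t, max (-K) (min K x)) ⟨ht, max_min_mem_Icc (by linarith) x⟩
          (t, max (-K) (min K y)) ⟨ht, max_min_mem_Icc (by linarith) y⟩
    _ ≤ L * dist x y := by
        rw [Prod.dist_eq, dist_self, max_eq_right dist_nonneg]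
        gcongr
        simpa using hclamp.dist_le_mul x y

lemma exists_norm_hTrunc_le (hK : 0 ≤ K) (a b : ℝ) :
    ∃ C, ∀ t ∈ Icc a b, ∀ x, ‖hTrunc μ σ δ K t x‖ ≤ C := by
  obtain ⟨C, hC⟩ := (isCompact_Icc.prod (isCompact_Icc (a := -K) (b := K)))
    |>.exists_bound_of_continuousOn (contDiff_h μ σ δ).continuous.continuousOn
  exact ⟨C, fun t ht x => hC (t, _) ⟨ht, max_min_mem_Icc (by linarith) x⟩⟩

end Truncation

section Barrier

variable {μ σ δ K : ℝ}

/- At `z = K > 1` the cubic term dominates `σ² z (z - 1)`; at `z = -K` every term except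
`-2μ(z - 1)²` is positive, and the cubic one dominates it. -/
lemma sq_mul_h_eq (hσ : σ ≠ 0) (y z : ℝ) :
    σ^2 * h μ σ δ y z = -2*μ*(z-1)^2 - σ^2 * (2/(1 + exp (-y))) * (z-1) + σ^2 * z * (z-1)
      - 2*δ*(1 + exp y) * z * (z-1)^2 := by
  unfold h
  field_simp
  ring

lemma h_lt_zero_of_sq_lt (hμ : 0 ≤ μ) (hσ : 0 < σ^2) (hδ : 0 < δ)
    (hK : σ^2 < 2*δ*(K-1)) (y : ℝ) : h μ σ δ y K < 0 := by
  have hK1 : 1 < K := by nlinarith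
  have hq : 0 < 2/(1 + exp (-y)) := by positivity
  have hB : 2*δ ≤ 2*δ*(1 + exp y) := by nlinarith [exp_pos y]
  have := sq_mul_h_eq (μ := μ) (δ := δ) (sq_pos_iff.mp hσ) y K
  nlinarith [mul_pos (mul_pos hσ hq) (sub_pos.mpr hK1),
    mul_pos (by linarith : (0:ℝ) < K) (sub_pos.mpr hK1),
    mul_le_mul_of_nonneg_right hB (by positivity : (0:ℝ) ≤ K * (K - 1)^2)]

lemma zero_lt_h_neg_of_le (hσ : 0 < σ^2) (hδ : 0 ≤ δ) (hK : 0 ≤ K)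
    (hμK : μ ≤ δ*K) (y : ℝ) : 0 < h μ σ δ y (-K) := by
  have hq : 0 < 2/(1 + exp (-y)) := by positivity
  have hB : 2*δ ≤ 2*δ*(1 + exp y) := by nlinarith [exp_pos y]
  have := sq_mul_h_eq (μ := μ) (δ := δ) (sq_pos_iff.mp hσ) y (-K)
  nlinarith [mul_pos (mul_pos hσ hq) (by linarith : (0:ℝ) < K + 1),
    mul_nonneg hσ.le (mul_nonneg hK (by linarith : (0:ℝ) ≤ K + 1)),
    mul_le_mul_of_nonneg_right hB (by positivity : (0:ℝ) ≤ K * (K + 1)^2),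
    mul_le_mul_of_nonneg_right hμK (by positivity : (0:ℝ) ≤ (K + 1)^2)]

lemma add_le_mul_M' (hδ : 0 < δ) : 8*δ + 4*μ + 2*σ^2 ≤ δ * M' μ σ δ :=
  calc 8*δ + 4*μ + 2*σ^2 = δ * (8 + (4*μ + 2*σ^2)/δ) := by field_simp; ring
    _ ≤ δ * M' μ σ δ := by gcongr; exact le_max_of_le_right (le_max_right _ _)

lemma M'_nonneg (hμ : 0 ≤ μ) (hδ : 0 < δ) : 0 ≤ M' μ σ δ := by
  nlinarith [add_le_mul_M' (μ := μ) (σ := σ) hδ, sq_nonneg σ]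

lemma h_M'_lt_zero (hμ : 0 ≤ μ) (hσ : 0 < σ^2) (hδ : 0 < δ) (y : ℝ) :
    h μ σ δ y (M' μ σ δ) < 0 :=
  h_lt_zero_of_sq_lt hμ hσ hδ (by linarith [add_le_mul_M' (μ := μ) (σ := σ) hδ]) y

lemma zero_lt_h_neg_M' (hμ : 0 ≤ μ) (hσ : 0 < σ^2) (hδ : 0 < δ) (y : ℝ) :
    0 < h μ σ δ y (-M' μ σ δ) :=
  zero_lt_h_neg_of_le hσ hδ.le (M'_nonneg hμ hδ)
    (by linarith [add_le_mul_M' (μ := μ) (σ := σ) hδ]) y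

end Barrier

/-- Global existence of the solution of the initial value problem: for every Δ > 0
there is a non-exploding solution on [y₀ - Δ, ∞) with bounded slope. -/
theorem IVP_global_existence
    (μ σ δ Cbar : ℝ) (hμ : 0 < μ) (hμσ : μ < σ^2) (hδ : 0 < δ) :
    ∀ Δ : ℝ, 0 < Δ →
      ∃ g : ℝ → ℝ,
        ContDiffOn ℝ 2 g (Ici (y0 μ σ - Δ)) ∧
        g (y0 μ σ - Δ) = Cbar ∧
        deriv g (y0 μ σ - Δ) = 0 ∧
        (∀ y, y0 μ σ - Δ ≤ y → deriv (deriv g) y = h μ σ δ y (deriv g y)) ∧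
        (∀ y, y0 μ σ - Δ ≤ y → deriv g y ∈ Icc (-(M' μ σ δ)) (M' μ σ δ)) := by
  intro Δ _
  set a := y0 μ σ - Δ
  set K := M' μ σ δ
  have hσ : 0 < σ^2 := hμ.trans hμσ
  have hK : 0 ≤ K := M'_nonneg hμ.le hδ
  have hKmem : K ∈ Icc (-K) K := ⟨by linarith, le_rfl⟩
  obtain ⟨z, hz₀, hz⟩ := exists_forall_hasDerivAt_of_lipschitzWith (v := hTrunc μ σ δ K)
    (fun x => continuous_hTrunc.comp (continuous_id.prodMk continuous_const))
    (exists_lipschitzWith_hTrunc hK) (exists_norm_hTrunc_le hK) a 0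
  have hzK {y : ℝ} (hy : a ≤ y) : z y ∈ Icc (-K) K :=
    mem_Icc_of_forall_hasDerivAt hz (hz₀ ▸ ⟨by linarith, hK⟩)
      (fun t => (hTrunc_of_mem hKmem).trans_lt (h_M'_lt_zero hμ.le hσ hδ t))
      (fun t => (zero_lt_h_neg_M' hμ.le hσ hδ t).trans_eq
        (hTrunc_of_mem ⟨le_rfl, by linarith⟩).symm) hy
  obtain ⟨g, hg, hga, hg'⟩ :=
    exists_contDiff_two_deriv_eq (contDiff_one_of_forall_hasDerivAt continuous_hTrunc hz) a Cbar
  refine ⟨g, hg.contDiffOn, hga, by rw [hg', hz₀], fun y hy => ?_, fun y hy => hg' ▸ hzK hy⟩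
  rw [hg', (hz y).deriv, hTrunc_of_mem (hzK hy)]
end

section
/- For every M > 0 there exists Δ₀ > 0 such that for every Δ ≥ Δ₀ and every function g that is twice continuously differentiable on [y₀ − Δ, ∞) with g(y₀ − Δ) = C̄, g'(y₀ − Δ) = 0 and g''(y) = h(y, g'(y)) for all y ≥ y₀ − Δ, the first zero β̄_Δ := inf{ y > y₀ − Δ : g'(y) = 0 } of g' satisfies g(β̄_Δ) < −M. In other words, g(β̄_Δ) → −∞ as Δ → ∞. -/
open Real Set

open Filter Topology

/-!
Write `p = g'`, so that `p' = h(y, p)` with `p(y₀ - Δ) = 0`, and factor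
`h(y, z) = (z - 1) Q(y, z)` with `Q(y, 0) = 2μ/σ² - 2 sigmoid y`. For `y ≤ y₀ - 1` there is a band
`-ε ≤ z ≤ 0` on which `h ≤ -c` uniformly in `y`; a barrier argument then pushes `p` below `-ε`
within time `2ε/c` and keeps it there up to `y₀ - 1`, so `g` loses at least `ε (Δ - 1 - 2ε/c)`
before `y₀ - 1 ≤ β̄_Δ`. For large `y`, `h(y, z) ≥ 1 - μ/σ²` whenever `z ≤ 0`, which forces `p` to
vanish, so the first zero `β̄_Δ` exists and `g` is nonincreasing up to it.
-/

lemma h_eq_sub_one_mul (μ σ δ y z : ℝ) :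
    h μ σ δ y z = (z - 1) * (-(2 * δ / σ ^ 2 * (1 + exp y)) * z ^ 2
      + (1 - 2 * (μ / σ ^ 2) + 2 * δ / σ ^ 2 * (1 + exp y)) * z
      + 2 * (μ / σ ^ 2) - 2 * sigmoid y) := by
  rw [h, sigmoid_def]
  ring

lemma sigmoid_y0 {μ σ : ℝ} (hμ : 0 < μ) (hμσ : μ < σ ^ 2) : sigmoid (y0 μ σ) = μ / σ ^ 2 := by
  have hpos : 0 < σ ^ 2 / μ - 1 := by rw [sub_pos, one_lt_div hμ]; exact hμσ
  rw [sigmoid_def, y0, neg_neg, exp_log hpos]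
  field_simp
  ring

lemma sub_one_mul_quadratic_le_neg {a s k v ε c : ℝ} (ha₀ : 0 ≤ a) (hk : 0 ≤ k)
    (hs : 2 * c ≤ 2 * a - 2 * s) (hε : ε ≤ 1) (hεc : (1 + 2 * k) * ε ≤ c)
    (hv : v ∈ Icc (-ε) 0) :
    (v - 1) * (-k * v ^ 2 + (1 - 2 * a + k) * v + 2 * a - 2 * s) ≤ -c := by
  obtain ⟨hv₁, hv₂⟩ := hv
  have hsq : v ^ 2 ≤ ε := by nlinarith
  have hlin : -((1 + k) * ε) ≤ (1 - 2 * a + k) * v := by nlinarith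
  have hq : c ≤ -k * v ^ 2 + (1 - 2 * a + k) * v + 2 * a - 2 * s := by nlinarith
  have hc : 0 ≤ c := le_trans (by nlinarith) hεc
  nlinarith [mul_nonpos_of_nonpos_of_nonneg hv₂ (hc.trans hq)]

lemma le_sub_one_mul_quadratic {a s k v : ℝ} (ha : a ≤ 1) (hk₀ : 0 ≤ k) (hk : 2 * a - 1 ≤ k)
    (hs : 1 + a ≤ 2 * s) (hv : v ≤ 0) :
    1 - a ≤ (v - 1) * (-k * v ^ 2 + (1 - 2 * a + k) * v + 2 * a - 2 * s) := by
  have hq : -k * v ^ 2 + (1 - 2 * a + k) * v + 2 * a - 2 * s ≤ a - 1 := by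
    nlinarith [mul_nonneg (sq_nonneg v) hk₀]
  nlinarith

lemma exists_h_le_neg {μ σ δ : ℝ} (hμ : 0 < μ) (hμσ : μ < σ ^ 2) (hδ : 0 < δ) :
    ∃ ε > 0, ∃ c > 0, ∀ y ≤ y0 μ σ - 1, ∀ v ∈ Icc (-ε) 0, h μ σ δ y v ≤ -c := by
  have hσ : 0 < σ ^ 2 := hμ.trans hμσ
  set c := μ / σ ^ 2 - sigmoid (y0 μ σ - 1)
  have hc : 0 < c := by
    have := sigmoid_lt (show y0 μ σ - 1 < y0 μ σ by linarith)
    rw [sigmoid_y0 hμ hμσ] at this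
    linarith
  set K := 2 * δ / σ ^ 2 * (1 + exp (y0 μ σ))
  have hK : 0 ≤ K := by positivity
  refine ⟨min 1 (c / (1 + 2 * K)), by positivity, c, hc, fun y hy v hv ↦ ?_⟩
  have hk : 2 * δ / σ ^ 2 * (1 + exp y) ≤ K :=
    mul_le_mul_of_nonneg_left (by gcongr; linarith) (by positivity)
  rw [h_eq_sub_one_mul]
  refine sub_one_mul_quadratic_le_neg (div_pos hμ hσ).le (by positivity) ?_ (min_le_left _ _) ?_ hv
  · linarith [sigmoid_le hy]
  · calc (1 + 2 * (2 * δ / σ ^ 2 * (1 + exp y))) * min 1 (c / (1 + 2 * K))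
        ≤ (1 + 2 * K) * (c / (1 + 2 * K)) := by gcongr; exact min_le_right _ _
      _ = c := by field_simp

lemma exists_le_h {μ σ δ : ℝ} (hμ : 0 < μ) (hμσ : μ < σ ^ 2) (hδ : 0 < δ) :
    ∃ y₁, ∃ c > 0, ∀ y ≥ y₁, ∀ v ≤ 0, c ≤ h μ σ δ y v := by
  have hσ : 0 < σ ^ 2 := hμ.trans hμσ
  have ha : μ / σ ^ 2 < 1 := (div_lt_one hσ).mpr hμσ
  have hsig : ∀ᶠ y in atTop, (1 + μ / σ ^ 2) / 2 ≤ sigmoid y :=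
    tendsto_sigmoid_atTop.eventually (le_mem_nhds (by linarith))
  have hk : ∀ᶠ y in atTop, 2 * (μ / σ ^ 2) - 1 ≤ 2 * δ / σ ^ 2 * (1 + exp y) :=
    ((tendsto_atTop_add_const_left _ 1 tendsto_exp_atTop).const_mul_atTop
      (by positivity)).eventually_ge_atTop _
  obtain ⟨y₁, hy₁⟩ := (hsig.and hk).exists_forall_of_atTop
  refine ⟨y₁, 1 - μ / σ ^ 2, by linarith, fun y hy v hv ↦ ?_⟩
  rw [h_eq_sub_one_mul]
  exact le_sub_one_mul_quadratic ha.le (by positivity) (hy₁ y hy).2 (by linarith [(hy₁ y hy).1]) hv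

lemma hasDerivAt_deriv_of_contDiffOn_Ici {f F : ℝ → ℝ} {a : ℝ} (hf : ContDiffOn ℝ 2 f (Ici a))
    (hF : ∀ y ≥ a, deriv (deriv f) y = F y) (ha : F a ≠ 0) {y : ℝ} (hy : a ≤ y) :
    HasDerivAt (deriv f) (F y) y := by
  rw [← hF y hy]
  refine DifferentiableAt.hasDerivAt ?_
  rcases hy.eq_or_lt with rfl | hy
  · -- `deriv` takes the junk value `0` where `deriv f` is not differentiable
    by_contra hnd
    exact ha (by rw [← hF _ le_rfl, deriv_zero_of_not_differentiableAt hnd])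
  · have hf' : ContDiffOn ℝ 1 (deriv f) (Ioi a) :=
      (hf.mono Ioi_subset_Ici_self).deriv_of_isOpen isOpen_Ioi (by norm_num)
    exact (hf'.differentiableOn one_ne_zero).differentiableAt (Ioi_mem_nhds hy)

lemma le_sub_mul_of_hasDerivAt {p p' : ℝ → ℝ} {a b B m : ℝ}
    (hp : ∀ y ∈ Icc a b, HasDerivAt p (p' y) y) (ha : p a ≤ B)
    (htouch : ∀ y ∈ Ico a b, p y = B - m * (y - a) → p' y < -m) :
    ∀ y ∈ Icc a b, p y ≤ B - m * (y - a) := by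
  refine image_le_of_deriv_right_lt_deriv_boundary'
    (fun y hy ↦ (hp y hy).continuousAt.continuousWithinAt)
    (fun y hy ↦ (hp y (Ico_subset_Icc_self hy)).hasDerivWithinAt) (by simpa using ha)
    (by fun_prop) (fun y _ ↦ ?_) htouch
  exact ((((hasDerivAt_id y).sub_const a).const_mul m).const_sub B).hasDerivWithinAt.congr_deriv
    (by ring)

section Band

variable {F : ℝ → ℝ → ℝ} {p : ℝ → ℝ} {a b ε c : ℝ}

lemma le_neg_mul_of_hasDerivAt (hc : 0 < c) (hp : ∀ y ∈ Icc a b, HasDerivAt p (F y (p y)) y)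
    (ha : p a ≤ 0) (hF : ∀ y ∈ Icc a b, ∀ v ∈ Icc (-ε) 0, F y v ≤ -c) :
    ∀ y ∈ Icc a b, y ≤ a + 2 * ε / c → p y ≤ -(c / 2 * (y - a)) := by
  intro y hy hyT
  have hbarrier := le_sub_mul_of_hasDerivAt (a := a) (b := y) (B := 0) (m := c / 2)
    (fun x hx ↦ hp x ⟨hx.1, hx.2.trans hy.2⟩) ha (fun x hx hpx ↦ ?_) y ⟨hy.1, le_rfl⟩
  · simpa using hbarrier
  have hband : p x ∈ Icc (-ε) 0 := by
    rw [hpx]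
    constructor
    · have : c / 2 * (x - a) ≤ ε := calc
        c / 2 * (x - a) ≤ c / 2 * (2 * ε / c) := by gcongr; linarith [hx.2]
        _ = ε := by field_simp
      linarith
    · nlinarith [hx.1]
  linarith [hF x ⟨hx.1, hx.2.le.trans hy.2⟩ _ hband]

lemma le_neg_of_hasDerivAt (hp : ∀ y ∈ Icc a b, HasDerivAt p (F y (p y)) y)
    (ha : p a ≤ -ε) (hF : ∀ y ∈ Icc a b, F y (-ε) < 0) :
    ∀ y ∈ Icc a b, p y ≤ -ε := by
  intro y hy
  simpa using le_sub_mul_of_hasDerivAt (m := 0) hp ha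
    (fun x hx hpx ↦ by simpa [hpx] using hF x (Ico_subset_Icc_self hx)) y hy

end Band

lemma exists_eq_zero_of_le_deriv {p p' : ℝ → ℝ} {a b c : ℝ} (hc : 0 < c)
    (hp : ∀ y ≥ a, HasDerivAt p (p' y) y) (ha : p a ≤ 0)
    (hgrow : ∀ y ≥ b, p y ≤ 0 → c ≤ p' y) : ∃ z ≥ a, p z = 0 := by
  by_contra! hne
  have hcont : ContinuousOn p (Ici a) := fun y hy ↦ (hp y hy).continuousAt.continuousWithinAt
  have hneg : ∀ y ≥ a, p y < 0 := by
    intro y hy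
    by_contra! hpos
    obtain ⟨z, hz, hz0⟩ := intermediate_value_Icc hy (hcont.mono Icc_subset_Ici_self) ⟨ha, hpos⟩
    exact hne z hz.1 hz0
  set a' := max a b
  have ha' : a ≤ a' := le_max_left a b
  have hcont' : ContinuousOn p (Ici a') := hcont.mono (Ici_subset_Ici.mpr ha')
  -- `p` grows at rate at least `c` while it is negative, so it reaches `0` by time `a' - p a' / c`
  have hT : a' ≤ a' - p a' / c := by
    have := div_nonpos_of_nonpos_of_nonneg (hneg a' ha').le hc.le
    linarith
  have hrise := (convex_Ici a').mul_sub_le_image_sub_of_le_deriv (C := c) hcont'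
    (fun y hy ↦ (hp y (ha'.trans (interior_subset hy))).differentiableAt.differentiableWithinAt)
    (fun y hy ↦ ?_) a' self_mem_Ici _ hT hT
  · have hstep : c * (a' - p a' / c - a') = -p a' := by field_simp; ring
    linarith [hneg _ (ha'.trans hT)]
  · rw [interior_Ici] at hy
    have hy' : a ≤ y := ha'.trans hy.le
    rw [(hp y hy').deriv]
    exact hgrow y ((le_max_right a b).trans hy.le) (hneg y hy').le

lemma nonpos_of_lt_sInf_zeros {p : ℝ → ℝ} {a b y : ℝ} (hp : ContinuousOn p (Ioi a)) (hab : a < b)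
    (hneg : ∀ x ∈ Ioc a b, p x < 0) (hy : y ∈ Ioo a (sInf {x | a < x ∧ p x = 0})) : p y ≤ 0 := by
  by_contra! hpos
  have hw : min y b ∈ Ioc a b := ⟨lt_min hy.1 hab, min_le_right _ _⟩
  obtain ⟨z, hz, hz0⟩ := intermediate_value_Ioo (min_le_left y b)
    (hp.mono ((Icc_subset_Ioi_iff (min_le_left y b)).mpr hw.1)) ⟨hneg _ hw, hpos⟩
  have hbdd : BddBelow {x | a < x ∧ p x = 0} := ⟨a, fun x hx ↦ hx.1.le⟩
  have := csInf_le hbdd ⟨hw.1.trans hz.1, hz0⟩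
  linarith [hz.2, hy.2]

theorem apply_sInf_zeros_deriv_le {g : ℝ → ℝ} {F : ℝ → ℝ → ℝ} {a b y₁ ε c c' : ℝ}
    (hε : 0 < ε) (hc : 0 < c) (hc' : 0 < c') (hab : a + 2 * ε / c ≤ b)
    (hg : ContDiffOn ℝ 2 g (Ici a)) (hg' : deriv g a = 0)
    (hode : ∀ y ≥ a, deriv (deriv g) y = F y (deriv g y))
    (hdown : ∀ y ∈ Icc a b, ∀ v ∈ Icc (-ε) 0, F y v ≤ -c)
    (hup : ∀ y ≥ y₁, ∀ v ≤ 0, c' ≤ F y v) :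
    g (sInf {y | a < y ∧ deriv g y = 0}) ≤ g a - ε * (b - (a + 2 * ε / c)) := by
  set T := a + 2 * ε / c
  have haT : a < T := lt_add_of_pos_right a (by positivity)
  have hp : ∀ y ≥ a, HasDerivAt (deriv g) (F y (deriv g y)) y :=
    fun y ↦ hasDerivAt_deriv_of_contDiffOn_Ici hg hode <| by
      rw [hg']
      exact ((hdown a ⟨le_rfl, by linarith⟩ 0 ⟨by linarith, le_rfl⟩).trans_lt (by linarith)).ne
  have hdescent := le_neg_mul_of_hasDerivAt hc (fun y hy ↦ hp y hy.1) hg'.le hdown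
  have hT : deriv g T ≤ -ε := by
    have := hdescent T ⟨haT.le, hab⟩ le_rfl
    have hε' : c / 2 * (T - a) = ε := by simp only [T]; field_simp; ring
    linarith
  have hplateau := le_neg_of_hasDerivAt (a := T) (fun y hy ↦ hp y (haT.le.trans hy.1)) hT
    fun y hy ↦ (hdown y ⟨haT.le.trans hy.1, hy.2⟩ _ ⟨le_rfl, by linarith⟩).trans_lt (by linarith)
  have hneg : ∀ y ∈ Ioc a b, deriv g y < 0 := by
    intro y hy
    rcases le_or_gt y T with hyT | hyT
    · exact (hdescent y (Ioc_subset_Icc_self hy) hyT).trans_lt (by nlinarith [hy.1])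
    · exact (hplateau y ⟨hyT.le, hy.2⟩).trans_lt (by linarith)
  obtain ⟨z, hz, hz0⟩ := exists_eq_zero_of_le_deriv hc' (fun y hy ↦ hp y (by linarith))
    (hneg b ⟨by linarith, le_rfl⟩).le (fun y hy hy0 ↦ hup y hy _ hy0)
  set β := sInf {y | a < y ∧ deriv g y = 0}
  have hbβ : b ≤ β := le_csInf ⟨z, by linarith, hz0⟩
    fun x hx ↦ not_lt.mp fun hxb ↦ (hneg x ⟨hx.1, hxb.le⟩).ne hx.2
  have hdiff : DifferentiableOn ℝ g (Ici a) := hg.differentiableOn two_ne_zero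
  have hanti : AntitoneOn g (Icc a β) := by
    refine antitoneOn_of_deriv_nonpos (convex_Icc a β) (hg.continuousOn.mono Icc_subset_Ici_self)
      (hdiff.mono (interior_subset.trans Icc_subset_Ici_self)) fun y hy ↦ ?_
    rw [interior_Icc] at hy
    exact nonpos_of_lt_sInf_zeros (fun y hy ↦ (hp y (le_of_lt hy)).continuousAt.continuousWithinAt)
      (by linarith) hneg hy
  have hdrop := (convex_Icc T b).image_sub_le_mul_sub_of_deriv_le
    (hg.continuousOn.mono fun y hy ↦ haT.le.trans hy.1)
    (hdiff.mono fun y hy ↦ haT.le.trans (interior_subset hy).1)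
    (fun y hy ↦ hplateau y (interior_subset hy)) T ⟨le_rfl, hab⟩ b ⟨hab, le_rfl⟩ hab
  linarith [hanti ⟨le_rfl, by linarith⟩ ⟨haT.le, by linarith⟩ haT.le,
    hanti ⟨by linarith, hbβ⟩ ⟨by linarith, le_rfl⟩ hbβ]

/-- Step 2 of the proof of Proposition p:FBVP: g(β̄_Δ) → -∞ as Δ → ∞. -/
theorem g_at_first_zero_tendsto_atBot
    (μ σ δ Cbar : ℝ) (hμ : 0 < μ) (hμσ : μ < σ^2) (hδ : 0 < δ) :
    ∀ M : ℝ, 0 < M → ∃ Δ₀ : ℝ, 0 < Δ₀ ∧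
      ∀ Δ : ℝ, Δ₀ ≤ Δ →
        ∀ g : ℝ → ℝ,
          ContDiffOn ℝ 2 g (Ici (y0 μ σ - Δ)) →
          g (y0 μ σ - Δ) = Cbar →
          deriv g (y0 μ σ - Δ) = 0 →
          (∀ y, y0 μ σ - Δ ≤ y → deriv (deriv g) y = h μ σ δ y (deriv g y)) →
          g (sInf {y | y0 μ σ - Δ < y ∧ deriv g y = 0}) < -M := by
  intro M hM
  obtain ⟨ε, hε, c, hc, hdown⟩ := exists_h_le_neg hμ hμσ hδ
  obtain ⟨y₁, c', hc', hup⟩ := exists_le_h hμ hμσ hδ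
  refine ⟨1 + 2 * ε / c + (M + |Cbar| + 1) / ε, by positivity,
    fun Δ hΔ g hg hgC hg' hode ↦ ?_⟩
  have hM' : 0 ≤ (M + |Cbar| + 1) / ε := by positivity
  have hab : y0 μ σ - Δ + 2 * ε / c ≤ y0 μ σ - 1 := by linarith
  have hle := apply_sInf_zeros_deriv_le hε hc hc' hab hg hg' hode (fun y hy ↦ hdown y hy.2) hup
  have hgap : M + |Cbar| + 1 ≤ ε * (y0 μ σ - 1 - (y0 μ σ - Δ + 2 * ε / c)) := by
    rw [← div_le_iff₀' hε]
    linarith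
  linarith [le_abs_self Cbar]
end
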